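/- Let p be a prime and F the field with p elements, and let 1 ≤ m ≤ p − 2. For every polynomial f ∈ F[x] with deg f ≤ p − 2 and f(0) = 0, one has (φ − id)^m(f) = 0 if and only if deg f ≤ m. (Over the prime field, the m-th generalized eigenspace of φ for eigenvalue 1 consists exactly of the polynomials of degree at most m vanishing at 0, i.e. it is spanned by x, x², …, x^m.) -/

import Mathlib

open Polynomial

/-- The map `φ_r : f(x) ↦ f(x+r) − f(r)` on polynomials over a commutative ring. -/
noncomputable def phiMap {R : Type*} [CommRing R] (r : R) (f : R[X]) : R[X] :=
  f.comp (X + C r) - C (f.eval r)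

/-!
Write `ψ = φ_r − id`, so `ψ f = (f(x + r) − f(x)) − f(r)`. It lowers the degree by at least one
and preserves `f(0) = 0`, so `ψ^m` kills every `f` with `f(0) = 0` and `deg f ≤ m`.
Conversely the coefficient of `x^(n-1)` in `ψ f` is `n · a_n · r` when `n = deg f ≥ 2`, so as long
as `n` stays below the characteristic `ψ` lowers the degree by exactly one, and `ψ^m f` has
degree `deg f − m ≥ 1` when `deg f > m`.
-/

namespace Polynomial

variable {R : Type*} [CommRing R]

theorem coeff_taylor_natDegree_sub_one (r : R) {f : R[X]} (hf : 1 ≤ f.natDegree) :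
    (taylor r f).coeff (f.natDegree - 1) =
      f.coeff (f.natDegree - 1) + f.natDegree * f.leadingCoeff * r := by
  -- the `(n-1)`-st Hasse derivative of `f` is the linear polynomial `a_(n-1) + n a_n x`
  have hg : (hasseDeriv (f.natDegree - 1) f).natDegree ≤ 1 :=
    (natDegree_hasseDeriv_le f _).trans (by omega)
  rw [taylor_coeff, eq_X_add_C_of_natDegree_le_one hg, hasseDeriv_coeff, hasseDeriv_coeff,
    Nat.add_sub_cancel' hf, Nat.choose_symm hf, Nat.choose_one_right]
  simp only [zero_add, Nat.choose_self, Nat.cast_one, one_mul, coeff_natDegree, eval_add,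
    eval_mul, eval_C, eval_X]
  ring

end Polynomial

section PhiMap

variable {R : Type*} [CommRing R] (r : R)

theorem phiMap_sub_self (f : R[X]) : phiMap r f - f = (taylor r f - f) - C (f.eval r) := by
  rw [phiMap, taylor_apply]; ring

theorem eval_zero_phiMap_sub_self (f : R[X]) : (phiMap r f - f).eval 0 = -f.eval 0 := by
  simp [phiMap, eval_comp]

theorem natDegree_phiMap_sub_self_le (f : R[X]) :
    (phiMap r f - f).natDegree ≤ f.natDegree - 1 := by
  have hdiff : (taylor r f - f).natDegree ≤ f.natDegree - 1 :=
    natDegree_le_pred ((natDegree_sub_le _ _).trans (by rw [natDegree_taylor, max_self]))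
      (by rw [coeff_sub, coeff_taylor_natDegree, coeff_natDegree, sub_self])
  rw [phiMap_sub_self]
  exact (natDegree_sub_le _ _).trans (max_le hdiff (by simp))

theorem coeff_phiMap_sub_self_natDegree_sub_one {f : R[X]} (hf : 2 ≤ f.natDegree) :
    (phiMap r f - f).coeff (f.natDegree - 1) = f.natDegree * f.leadingCoeff * r := by
  rw [phiMap_sub_self, coeff_sub, coeff_sub, coeff_taylor_natDegree_sub_one r (by omega),
    coeff_C, if_neg (by omega)]
  ring

theorem natDegree_phiMap_sub_self {f : R[X]} (hf : 2 ≤ f.natDegree)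
    (hlead : (f.natDegree : R) * f.leadingCoeff * r ≠ 0) :
    (phiMap r f - f).natDegree = f.natDegree - 1 :=
  (natDegree_phiMap_sub_self_le r f).antisymm
    (le_natDegree_of_ne_zero (by rwa [coeff_phiMap_sub_self_natDegree_sub_one r hf]))

theorem eval_zero_iterate_phiMap_sub_self {f : R[X]} (hf : f.eval 0 = 0) (k : ℕ) :
    ((fun g => phiMap r g - g)^[k] f).eval 0 = 0 := by
  induction k with
  | zero => exact hf
  | succ k ih => rw [Function.iterate_succ_apply', eval_zero_phiMap_sub_self, ih, neg_zero]

theorem natDegree_iterate_phiMap_sub_self_le (f : R[X]) (k : ℕ) :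
    ((fun g => phiMap r g - g)^[k] f).natDegree ≤ f.natDegree - k := by
  induction k with
  | zero => rfl
  | succ k ih =>
    rw [Function.iterate_succ_apply']
    exact (natDegree_phiMap_sub_self_le r _).trans (by omega)

theorem iterate_phiMap_sub_self_eq_zero {f : R[X]} (hf : f.eval 0 = 0) {k : ℕ}
    (hk : f.natDegree ≤ k) : (fun g => phiMap r g - g)^[k] f = 0 := by
  have hdeg := natDegree_iterate_phiMap_sub_self_le r f k
  rw [eq_C_of_natDegree_eq_zero (p := (fun g => phiMap r g - g)^[k] f) (by omega),
    coeff_zero_eq_eval_zero, eval_zero_iterate_phiMap_sub_self r hf, C_0]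

theorem natDegree_iterate_phiMap_sub_self [IsDomain R] (hr : r ≠ 0) {k : ℕ} :
    ∀ {f : R[X]}, k < f.natDegree → (∀ d, 0 < d → d ≤ f.natDegree → (d : R) ≠ 0) →
      ((fun g => phiMap r g - g)^[k] f).natDegree = f.natDegree - k := by
  induction k with
  | zero => intros; rfl
  | succ k ih =>
    intro f hk hchar
    have hf : f ≠ 0 := by rintro rfl; simp at hk
    have hstep := natDegree_phiMap_sub_self r (by omega)
      (mul_ne_zero (mul_ne_zero (hchar _ (by omega) le_rfl) (leadingCoeff_ne_zero.2 hf)) hr)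
    rw [Function.iterate_succ_apply, ih (by omega) (fun d hd hdf => hchar d hd (by omega)),
      hstep]
    omega

end PhiMap

theorem phi_generalized_eigenspace_prime_field_general (p : ℕ) (hp : p.Prime)
    (m : ℕ)
    (f : (ZMod p)[X]) (hdeg : f.natDegree ≤ p - 2) (hf0 : f.eval 0 = 0) :
    (fun g : (ZMod p)[X] => phiMap (1 : ZMod p) g - g)^[m] f = 0 ↔
      f.natDegree ≤ m := by
  have := Fact.mk hp
  refine ⟨fun h => ?_, iterate_phiMap_sub_self_eq_zero 1 hf0⟩
  by_contra! hm
  have hchar : ∀ d, 0 < d → d ≤ f.natDegree → (d : ZMod p) ≠ 0 := fun d hd hdf hdp => by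
    have := Nat.le_of_dvd hd ((ZMod.natCast_eq_zero_iff d p).1 hdp)
    omega
  have hdeg_iterate := natDegree_iterate_phiMap_sub_self 1 one_ne_zero hm hchar
  rw [h, natDegree_zero] at hdeg_iterate
  omega

/-- over the prime field `𝔽_p` with `1 ≤ m ≤ p − 2`, a polynomial `f`
with `deg f ≤ p − 2` and `f(0) = 0` satisfies `(φ − id)^m(f) = 0` iff
`deg f ≤ m`. -/
theorem phi_generalized_eigenspace_prime_field (p : ℕ) (hp : p.Prime)
    (m : ℕ) (hm1 : 1 ≤ m) (hm2 : m ≤ p - 2)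
    (f : (ZMod p)[X]) (hdeg : f.natDegree ≤ p - 2) (hf0 : f.eval 0 = 0) :
    (fun g : (ZMod p)[X] => phiMap (1 : ZMod p) g - g)^[m] f = 0 ↔
      f.natDegree ≤ m :=
  phi_generalized_eigenspace_prime_field_general p hp m f hdeg hf0
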